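/- On the hexagonal (honeycomb) tiling graph, the Ollivier–Ricci curvature of every edge equals −2/3. -/

import Mathlib

open Classical Filter
noncomputable section

/-- A coupling (transference plan) between two measures on `V`, given as
nonnegative density functions. -/
def IsCoupling {V : Type*} (μ ν : V → ℝ) (ξ : V → V → ℝ) : Prop :=
  (∀ y y', 0 ≤ ξ y y') ∧ (∀ y, ∑' y', ξ y y' = μ y) ∧ (∀ y', ∑' y, ξ y y' = ν y')

/-- The 1-Wasserstein distance between `μ` and `ν` for the cost function `ρ`. -/
def W1 {V : Type*} (ρ : V → V → ℝ) (μ ν : V → ℝ) : ℝ :=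
  sInf {c | ∃ ξ, IsCoupling μ ν ξ ∧
    HasSum (fun p : V × V => ξ p.1 p.2 * ρ p.1 p.2) c}

/-- The shortest-path distance of a graph, as a real number. -/
def graphDist {V : Type*} (G : SimpleGraph V) (x y : V) : ℝ := G.dist x y

/-- The degree of a vertex. -/
def deg {V : Type*} (G : SimpleGraph V) (x : V) : ℕ := Nat.card {y | G.Adj x y}

/-- The Dirac measure at `x`. -/
def dirac {V : Type*} (x : V) : V → ℝ := fun y => if y = x then 1 else 0

/-- The lazy random walk `μ_x^t = (1-t)·δ_x + t·(uniform measure on the neighbors of x)`. -/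
def lazyWalk {V : Type*} (G : SimpleGraph V) (t : ℝ) (x y : V) : ℝ :=
  if y = x then 1 - t else if G.Adj x y then t / (deg G x) else 0

/-- The coarse Ricci curvature `κ^t(x,x') = 1 - W₁(μ_x^t, μ_{x'}^t)/d(x,x')`. -/
def kappa {V : Type*} (G : SimpleGraph V) (t : ℝ) (x x' : V) : ℝ :=
  1 - W1 (graphDist G) (lazyWalk G t x) (lazyWalk G t x') / graphDist G x x'

/-- The hexagonal (honeycomb) lattice in "brick wall" coordinates on `ℤ × ℤ`:
each vertex `(i,j)` is adjacent to its horizontal neighbors `(i±1,j)`, and has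
one vertical edge, upwards if `i+j` is even, downwards otherwise.  This graph
is 3-regular, bipartite, of girth 6. -/
def hexGraph : SimpleGraph (ℤ × ℤ) where
  Adj u v := (u.2 = v.2 ∧ (u.1 = v.1 + 1 ∨ v.1 = u.1 + 1)) ∨
    (u.1 = v.1 ∧ ((Even (u.1 + u.2) ∧ v.2 = u.2 + 1) ∨ (Even (v.1 + v.2) ∧ u.2 = v.2 + 1)))
  symm := by
    constructor
    rintro u v (⟨h1, h2⟩ | ⟨h1, h2⟩)
    · exact Or.inl ⟨h1.symm, h2.symm⟩
    · exact Or.inr ⟨h1.symm, h2.symm⟩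
  loopless := ⟨by rintro ⟨a, b⟩ (⟨-, h | h⟩ | ⟨-, ⟨-, h⟩ | ⟨-, h⟩⟩) <;> omega⟩

/-!
For an edge `x ~ x'` let `y₁, y₂` and `z₁, z₂` be the other neighbours of `x` and `x'`. Since the
honeycomb has girth 6, `d(yᵢ, zⱼ) = 3`. For `t ≤ 3/4` the transport plan that leaves `t/3` at `x`
and at `x'`, moves `1 - 4t/3` across the edge and each `t/3` from `yᵢ` to `zᵢ` costs `1 + 2t/3`;
the `1`-Lipschitz potential `d({y₁, y₂}, ·)`, equal to `0, 1, 2, 3` at `yᵢ, x, x', zⱼ`, shows by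
weak Kantorovich duality that no coupling is cheaper. Hence `κ_t(x, x') = -2t/3` for small `t`.
-/

open SimpleGraph

section Coupling

variable {V : Type*} {ρ : V → V → ℝ} {μ ν : V → ℝ} {ξ : V → V → ℝ}

/-- `IsCoupling` only constrains `tsum`s, which vanish on non-summable rows, so summability has to
be recovered from the cost. -/
theorem IsCoupling.summable_row (hρ : ∀ u v, u ≠ v → 1 ≤ ρ u v) (hξ : IsCoupling μ ν ξ)
    (hcost : Summable fun p : V × V => ξ p.1 p.2 * ρ p.1 p.2) (u : V) : Summable (ξ u) := by
  rw [← Finset.summable_compl_iff {u}]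
  refine .of_nonneg_of_le (fun v => hξ.1 u v) (fun v => ?_) ((hcost.prod_factor u).subtype _)
  have hv : u ≠ v := fun h => v.2 (by simp [h])
  exact le_mul_of_one_le_right (hξ.1 u v) (hρ u v hv)

theorem IsCoupling.summable_col (hρ : ∀ u v, u ≠ v → 1 ≤ ρ u v) (hξ : IsCoupling μ ν ξ)
    (hcost : Summable fun p : V × V => ξ p.1 p.2 * ρ p.1 p.2) (v : V) :
    Summable fun u => ξ u v := by
  rw [← Finset.summable_compl_iff {v}]
  refine .of_nonneg_of_le (fun u => hξ.1 u v) (fun u => ?_)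
    ((hcost.comp_injective (Prod.mk_left_injective v)).subtype _)
  have hu : (u : V) ≠ v := fun h => u.2 (by simp [h])
  exact le_mul_of_one_le_right (hξ.1 u v) (hρ u v hu)

theorem IsCoupling.eq_zero_of_left_eq_zero (hρ : ∀ u v, u ≠ v → 1 ≤ ρ u v)
    (hξ : IsCoupling μ ν ξ) (hcost : Summable fun p : V × V => ξ p.1 p.2 * ρ p.1 p.2) {u : V}
    (hu : μ u = 0) (v : V) : ξ u v = 0 := by
  have h : HasSum (ξ u) 0 := hu ▸ hξ.2.1 u ▸ (hξ.summable_row hρ hcost u).hasSum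
  exact congrFun ((hasSum_zero_iff_of_nonneg (hξ.1 u)).1 h) v

theorem IsCoupling.eq_zero_of_right_eq_zero (hρ : ∀ u v, u ≠ v → 1 ≤ ρ u v)
    (hξ : IsCoupling μ ν ξ) (hcost : Summable fun p : V × V => ξ p.1 p.2 * ρ p.1 p.2) {v : V}
    (hv : ν v = 0) (u : V) : ξ u v = 0 := by
  have h : HasSum (fun u => ξ u v) 0 := hv ▸ hξ.2.2 v ▸ (hξ.summable_col hρ hcost v).hasSum
  exact congrFun ((hasSum_zero_iff_of_nonneg (hξ.1 · v)).1 h) u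

/-- Weak Kantorovich duality. -/
theorem IsCoupling.sum_mul_sub_sum_mul_le (hρ : ∀ u v, u ≠ v → 1 ≤ ρ u v)
    (hξ : IsCoupling μ ν ξ) {f : V → ℝ} (hf : ∀ u v, f v - f u ≤ ρ u v) {s : Finset V}
    (hμ : ∀ u ∉ s, μ u = 0) (hν : ∀ v ∉ s, ν v = 0) {c : ℝ}
    (hc : HasSum (fun p : V × V => ξ p.1 p.2 * ρ p.1 p.2) c) :
    ∑ v ∈ s, ν v * f v - ∑ u ∈ s, μ u * f u ≤ c := by
  have hrow : ∀ u, μ u = ∑ v ∈ s, ξ u v := fun u => (hξ.2.1 u).symm.trans <|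
    tsum_eq_sum fun v hv => hξ.eq_zero_of_right_eq_zero hρ hc.summable (hν v hv) u
  have hcol : ∀ v, ν v = ∑ u ∈ s, ξ u v := fun v => (hξ.2.2 v).symm.trans <|
    tsum_eq_sum fun u hu => hξ.eq_zero_of_left_eq_zero hρ hc.summable (hμ u hu) v
  have hc' : c = ∑ p ∈ s ×ˢ s, ξ p.1 p.2 * ρ p.1 p.2 := by
    refine hc.unique (hasSum_sum_of_ne_finset_zero fun p hp => ?_)
    rcases not_and_or.1 (Finset.mem_product.not.1 hp) with h | h
    · rw [hξ.eq_zero_of_left_eq_zero hρ hc.summable (hμ _ h), zero_mul]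
    · rw [hξ.eq_zero_of_right_eq_zero hρ hc.summable (hν _ h), zero_mul]
  calc ∑ v ∈ s, ν v * f v - ∑ u ∈ s, μ u * f u
      = ∑ u ∈ s, ∑ v ∈ s, ξ u v * (f v - f u) := by
        simp only [hrow, hcol, Finset.sum_mul, mul_sub, Finset.sum_sub_distrib]
        rw [Finset.sum_comm]
    _ ≤ ∑ u ∈ s, ∑ v ∈ s, ξ u v * ρ u v :=
        Finset.sum_le_sum fun u _ => Finset.sum_le_sum fun v _ =>
          mul_le_mul_of_nonneg_left (hf u v) (hξ.1 u v)
    _ = c := by rw [hc', Finset.sum_product]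

theorem W1_eq_of_isCoupling_of_lipschitz (hρ₀ : ∀ u v, 0 ≤ ρ u v)
    (hρ : ∀ u v, u ≠ v → 1 ≤ ρ u v) (hξ : IsCoupling μ ν ξ) {c : ℝ}
    (hc : HasSum (fun p : V × V => ξ p.1 p.2 * ρ p.1 p.2) c) {f : V → ℝ}
    (hf : ∀ u v, f v - f u ≤ ρ u v) {s : Finset V} (hμ : ∀ u ∉ s, μ u = 0)
    (hν : ∀ v ∉ s, ν v = 0) (hfc : ∑ v ∈ s, ν v * f v - ∑ u ∈ s, μ u * f u = c) :
    W1 ρ μ ν = c := by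
  have hmem : c ∈ {c | ∃ ξ, IsCoupling μ ν ξ ∧
      HasSum (fun p : V × V => ξ p.1 p.2 * ρ p.1 p.2) c} := ⟨ξ, hξ, hc⟩
  refine le_antisymm (csInf_le ⟨0, ?_⟩ hmem) (le_csInf ⟨c, hmem⟩ ?_)
  · rintro c' ⟨ξ', hξ', hc'⟩
    exact hc'.nonneg fun p => mul_nonneg (hξ'.1 _ _) (hρ₀ _ _)
  · rintro c' ⟨ξ', hξ', hc'⟩
    exact hfc ▸ hξ'.sum_mul_sub_sum_mul_le hρ hf hμ hν hc'

theorem hasSum_dirac_prod_left (p : V × V) (u : V) :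
    HasSum (fun v => dirac p (u, v)) (dirac p.1 u) := by
  convert hasSum_ite_eq p.2 (dirac p.1 u) using 2 with v
  by_cases hv : v = p.2 <;> simp [dirac, Prod.ext_iff, hv]

theorem hasSum_dirac_prod_right (p : V × V) (v : V) :
    HasSum (fun u => dirac p (u, v)) (dirac p.2 v) := by
  convert hasSum_ite_eq p.1 (dirac p.2 v) using 2 with u
  by_cases hu : u = p.1 <;> simp [dirac, Prod.ext_iff, hu]

theorem isCoupling_sum_dirac {ι : Type*} (s : Finset ι) {w : ι → ℝ} (hw : ∀ i ∈ s, 0 ≤ w i)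
    (p : ι → V × V) :
    IsCoupling (fun u => ∑ i ∈ s, w i * dirac (p i).1 u) (fun v => ∑ i ∈ s, w i * dirac (p i).2 v)
      (fun u v => ∑ i ∈ s, w i * dirac (p i) (u, v)) := by
  refine ⟨fun u v => Finset.sum_nonneg fun i hi => mul_nonneg (hw i hi) ?_, fun u => ?_,
    fun v => ?_⟩
  · unfold dirac; split_ifs <;> norm_num
  · exact (hasSum_sum fun i _ => (hasSum_dirac_prod_left (p i) u).mul_left (w i)).tsum_eq
  · exact (hasSum_sum fun i _ => (hasSum_dirac_prod_right (p i) v).mul_left (w i)).tsum_eq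

theorem hasSum_sum_dirac_mul {ι : Type*} (s : Finset ι) (w : ι → ℝ) (p : ι → V × V) :
    HasSum (fun q : V × V => (∑ i ∈ s, w i * dirac (p i) q) * ρ q.1 q.2)
      (∑ i ∈ s, w i * ρ (p i).1 (p i).2) := by
  simp_rw [Finset.sum_mul]
  refine hasSum_sum fun i _ => ?_
  convert hasSum_ite_eq (p i) (w i * ρ (p i).1 (p i).2) using 2 with q
  by_cases hq : q = p i <;> simp [dirac, hq]

theorem sum_sum_dirac_mul {ι : Type*} (s : Finset V) (I : Finset ι) (w : ι → ℝ) (q : ι → V)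
    (hq : ∀ i ∈ I, q i ∈ s) (g : V → ℝ) :
    ∑ v ∈ s, (∑ i ∈ I, w i * dirac (q i) v) * g v = ∑ i ∈ I, w i * g (q i) := by
  simp_rw [Finset.sum_mul]
  rw [Finset.sum_comm]
  refine Finset.sum_congr rfl fun i hi => ?_
  simp [dirac, hq i hi]

theorem sum_dirac_eq_zero {ι : Type*} {I : Finset ι} {s : Finset V} {q : ι → V}
    (hq : ∀ i ∈ I, q i ∈ s) (w : ι → ℝ) {u : V} (hu : u ∉ s) :
    ∑ i ∈ I, w i * dirac (q i) u = 0 :=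
  Finset.sum_eq_zero fun i hi => by simp [dirac, show u ≠ q i from fun h => hu (h ▸ hq i hi)]

end Coupling

section Graph

variable {V : Type*} {G : SimpleGraph V}

theorem graphDist_nonneg (G : SimpleGraph V) (u v : V) : 0 ≤ graphDist G u v := Nat.cast_nonneg _

theorem SimpleGraph.Connected.one_le_graphDist (hG : G.Connected) {u v : V} (h : u ≠ v) :
    1 ≤ graphDist G u v :=
  Nat.one_le_cast.2 (hG.pos_dist_of_ne h)

theorem SimpleGraph.Connected.min_dist_sub_min_dist_le (hG : G.Connected) (a b u v : V) :
    ((min (G.dist a v) (G.dist b v) : ℕ) : ℝ) - ((min (G.dist a u) (G.dist b u) : ℕ) : ℝ) ≤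
      graphDist G u v := by
  have ha := hG.dist_triangle (u := a) (v := u) (w := v)
  have hb := hG.dist_triangle (u := b) (v := u) (w := v)
  have : min (G.dist a v) (G.dist b v) ≤ min (G.dist a u) (G.dist b u) + G.dist u v := by omega
  rw [graphDist, sub_le_iff_le_add']
  exact_mod_cast this

theorem SimpleGraph.dist_eq_three_of_three_le {y x x' z : V} (h₁ : G.Adj y x) (h₂ : G.Adj x x')
    (h₃ : G.Adj x' z) (h : 3 ≤ G.dist y z) : G.dist y z = 3 :=
  le_antisymm (by simpa using dist_le (.cons h₁ (.cons h₂ h₃.toWalk))) h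

theorem SimpleGraph.Connected.dist_eq_two_of_three_le (hG : G.Connected) {y x x' z : V}
    (h₁ : G.Adj y x) (h₂ : G.Adj x x') (h₃ : G.Adj x' z) (h : 3 ≤ G.dist y z) :
    G.dist y x' = 2 := by
  have hle : G.dist y x' ≤ 2 := by simpa using dist_le (.cons h₁ h₂.toWalk)
  have htri := hG.dist_triangle (u := y) (v := x') (w := z)
  rw [dist_eq_one_iff_adj.2 h₃] at htri
  omega

theorem SimpleGraph.Connected.min_dist_eq_of_three_le (hG : G.Connected) {y₁ y₂ x x' z : V}
    (h₁ : G.Adj y₁ x) (h₂ : G.Adj y₂ x) (hxx' : G.Adj x x') (hz : G.Adj x' z)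
    (h₁z : 3 ≤ G.dist y₁ z) (h₂z : 3 ≤ G.dist y₂ z) :
    min (G.dist y₁ x) (G.dist y₂ x) = 1 ∧ min (G.dist y₁ x') (G.dist y₂ x') = 2 ∧
      min (G.dist y₁ z) (G.dist y₂ z) = 3 := by
  rw [dist_eq_one_iff_adj.2 h₁, dist_eq_one_iff_adj.2 h₂, hG.dist_eq_two_of_three_le h₁ hxx' hz h₁z,
    hG.dist_eq_two_of_three_le h₂ hxx' hz h₂z, dist_eq_three_of_three_le h₁ hxx' hz h₁z,
    dist_eq_three_of_three_le h₂ hxx' hz h₂z]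
  simp

theorem SimpleGraph.Coloring.three_le_dist (c : G.Coloring Bool) {y z : V} (h : G.Reachable y z)
    (hc : c y ≠ c z) (hyz : ¬G.Adj y z) : 3 ≤ G.dist y z := by
  obtain ⟨p, hp⟩ := h.exists_walk_length_eq_dist
  obtain ⟨k, hk⟩ : Odd p.length := (c.odd_length_iff_not_congr p).2 (by cases hy : c y <;> simp_all)
  have h1 : G.dist y z ≠ 1 := fun h1 => hyz (dist_eq_one_iff_adj.1 h1)
  omega

theorem exists_neighborSet_eq_of_deg_eq_three {x x' : V} (hd : deg G x = 3) (h : G.Adj x x') :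
    ∃ y₁ y₂, y₁ ≠ y₂ ∧ x' ≠ y₁ ∧ x' ≠ y₂ ∧ G.neighborSet x = {x', y₁, y₂} := by
  have hx' : x' ∈ G.neighborSet x := h
  have hcard : (G.neighborSet x \ {x'}).ncard = 2 := by
    rw [Set.ncard_sdiff_singleton_of_mem hx', ← Nat.card_coe_set_eq]
    exact congrArg (· - 1) hd
  obtain ⟨y₁, y₂, hy, hN⟩ := Set.ncard_eq_two.1 hcard
  have hy₁ : y₁ ∈ G.neighborSet x \ {x'} := hN ▸ by simp
  have hy₂ : y₂ ∈ G.neighborSet x \ {x'} := hN ▸ by simp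
  exact ⟨y₁, y₂, hy, Ne.symm hy₁.2, Ne.symm hy₂.2, by rw [← hN, Set.insert_sdiff_self_of_mem hx']⟩

theorem lazyWalk_eq_of_neighborSet {x a b c : V} (hN : G.neighborSet x = {a, b, c})
    (hab : a ≠ b) (hac : a ≠ c) (hbc : b ≠ c) (t : ℝ) :
    lazyWalk G t x =
      fun y => (1 - t) * dirac x y + t / 3 * (dirac a y + dirac b y + dirac c y) := by
  have hdeg : deg G x = 3 := by
    rw [deg, Nat.card_coe_set_eq]
    exact Set.ncard_eq_three.2 ⟨a, b, c, hab, hac, hbc, hN⟩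
  have hadj : ∀ y, G.Adj x y ↔ y = a ∨ y = b ∨ y = c := fun y => by
    rw [← mem_neighborSet, hN]
    simp
  have hxa := G.ne_of_adj ((hadj a).2 (Or.inl rfl))
  have hxb := G.ne_of_adj ((hadj b).2 (Or.inr (Or.inl rfl)))
  have hxc := G.ne_of_adj ((hadj c).2 (Or.inr (Or.inr rfl)))
  funext y
  simp only [lazyWalk, dirac, hadj, hdeg]
  split_ifs <;> simp_all

end Graph

section Edge

variable {V : Type*} {G : SimpleGraph V}

theorem W1_lazyWalk_eq_of_neighborSet (hG : G.Connected) {x x' y₁ y₂ z₁ z₂ : V}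
    (hxx' : G.Adj x x') (hNx : G.neighborSet x = {x', y₁, y₂})
    (hNx' : G.neighborSet x' = {x, z₁, z₂}) (hy : y₁ ≠ y₂) (hy₁ : x' ≠ y₁) (hy₂ : x' ≠ y₂)
    (hz : z₁ ≠ z₂) (hz₁ : x ≠ z₁) (hz₂ : x ≠ z₂) (h₁₁ : 3 ≤ G.dist y₁ z₁)
    (h₁₂ : 3 ≤ G.dist y₁ z₂) (h₂₁ : 3 ≤ G.dist y₂ z₁) (h₂₂ : 3 ≤ G.dist y₂ z₂) {t : ℝ}
    (ht₀ : 0 ≤ t) (ht : t ≤ 3 / 4) :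
    W1 (graphDist G) (lazyWalk G t x) (lazyWalk G t x') = 1 + 2 / 3 * t := by
  have hy₁x : G.Adj y₁ x := G.adj_symm (by rw [← mem_neighborSet, hNx]; simp)
  have hy₂x : G.Adj y₂ x := G.adj_symm (by rw [← mem_neighborSet, hNx]; simp)
  have hx'z₁ : G.Adj x' z₁ := by rw [← mem_neighborSet, hNx']; simp
  have hx'z₂ : G.Adj x' z₂ := by rw [← mem_neighborSet, hNx']; simp
  set w : Fin 5 → ℝ := ![t / 3, 1 - 4 * t / 3, t / 3, t / 3, t / 3]
  set p : Fin 5 → V × V := ![(x, x), (x, x'), (x', x'), (y₁, z₁), (y₂, z₂)]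
  have hμ : lazyWalk G t x = fun u => ∑ i, w i * dirac (p i).1 u := by
    rw [lazyWalk_eq_of_neighborSet hNx hy₁ hy₂ hy]
    funext u
    simp [w, p, Fin.sum_univ_five]
    ring
  have hν : lazyWalk G t x' = fun v => ∑ i, w i * dirac (p i).2 v := by
    rw [lazyWalk_eq_of_neighborSet hNx' hz₁ hz₂ hz]
    funext v
    simp [w, p, Fin.sum_univ_five]
    ring
  have hcost : ∑ i, w i * graphDist G (p i).1 (p i).2 = 1 + 2 / 3 * t := by
    simp [w, p, Fin.sum_univ_five, graphDist, dist_eq_one_iff_adj.2 hxx',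
      dist_eq_three_of_three_le hy₁x hxx' hx'z₁ h₁₁, dist_eq_three_of_three_le hy₂x hxx' hx'z₂ h₂₂]
    ring
  set s : Finset V := {x, x', y₁, y₂, z₁, z₂}
  have hp₁ : ∀ i ∈ Finset.univ, (p i).1 ∈ s := by intro i _; fin_cases i <;> simp [p, s]
  have hp₂ : ∀ i ∈ Finset.univ, (p i).2 ∈ s := by intro i _; fin_cases i <;> simp [p, s]
  set f : V → ℝ := fun v => ((min (G.dist y₁ v) (G.dist y₂ v) : ℕ) : ℝ)
  obtain ⟨hfx, hfx', hfz₁⟩ := hG.min_dist_eq_of_three_le hy₁x hy₂x hxx' hx'z₁ h₁₁ h₂₁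
  obtain ⟨-, -, hfz₂⟩ := hG.min_dist_eq_of_three_le hy₁x hy₂x hxx' hx'z₂ h₁₂ h₂₂
  rw [hμ, hν]
  refine W1_eq_of_isCoupling_of_lipschitz (graphDist_nonneg G) (fun _ _ => hG.one_le_graphDist)
    (isCoupling_sum_dirac Finset.univ (fun i _ => ?_) p) (hcost ▸ hasSum_sum_dirac_mul _ _ _)
    (f := f) (hG.min_dist_sub_min_dist_le y₁ y₂) (fun _ => sum_dirac_eq_zero hp₁ w)
    (fun _ => sum_dirac_eq_zero hp₂ w) ?_
  · fin_cases i <;> simp [w] <;> linarith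
  · rw [sum_sum_dirac_mul _ _ _ _ hp₂, sum_sum_dirac_mul _ _ _ _ hp₁]
    simp [Fin.sum_univ_five, w, p, f, hfx, hfx', hfz₁, hfz₂, -Nat.cast_min]
    ring

theorem kappa_eq_of_deg_eq_three (hG : G.Connected) {x x' : V}
    (hxx' : G.Adj x x') (hx : deg G x = 3) (hx' : deg G x' = 3)
    (hgirth : ∀ y z, G.Adj x y → G.Adj x' z → x' ≠ y → x ≠ z → 3 ≤ G.dist y z) {t : ℝ}
    (ht₀ : 0 ≤ t) (ht : t ≤ 3 / 4) :
    kappa G t x x' = -(2 / 3) * t := by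
  obtain ⟨y₁, y₂, hy, hy₁, hy₂, hNx⟩ := exists_neighborSet_eq_of_deg_eq_three hx hxx'
  obtain ⟨z₁, z₂, hz, hz₁, hz₂, hNx'⟩ := exists_neighborSet_eq_of_deg_eq_three hx' hxx'.symm
  have hxy₁ : G.Adj x y₁ := by rw [← mem_neighborSet, hNx]; simp
  have hxy₂ : G.Adj x y₂ := by rw [← mem_neighborSet, hNx]; simp
  have hx'z₁ : G.Adj x' z₁ := by rw [← mem_neighborSet, hNx']; simp
  have hx'z₂ : G.Adj x' z₂ := by rw [← mem_neighborSet, hNx']; simp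
  rw [kappa, W1_lazyWalk_eq_of_neighborSet hG hxx' hNx hNx' hy hy₁ hy₂ hz hz₁ hz₂
    (hgirth _ _ hxy₁ hx'z₁ hy₁ hz₁) (hgirth _ _ hxy₁ hx'z₂ hy₁ hz₂)
    (hgirth _ _ hxy₂ hx'z₁ hy₂ hz₁) (hgirth _ _ hxy₂ hx'z₂ hy₂ hz₂) ht₀ ht,
    graphDist, dist_eq_one_iff_adj.2 hxx']
  ring

end Edge

def hexColoring : hexGraph.Coloring Bool :=
  Coloring.mk (fun v => decide (Even (v.1 + v.2))) fun {v w} h => by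
    simp only [hexGraph, Int.even_iff] at h
    simp only [ne_eq, decide_eq_decide, Int.even_iff]
    omega

theorem reachable_of_forall_reachable_succ {V : Type*} {G : SimpleGraph V} {f : ℤ → V}
    (h : ∀ i, G.Reachable (f i) (f (i + 1))) (i j : ℤ) : G.Reachable (f i) (f j) := by
  suffices H : ∀ n, G.Reachable (f 0) (f n) from (H i).symm.trans (H j)
  intro n
  induction n using Int.induction_on with
  | zero => rfl
  | succ k ih => exact ih.trans (h k)
  | pred k ih => exact ih.trans (by simpa using (h (-k - 1)).symm)

theorem hexGraph_adj_succ_fst (i j : ℤ) : hexGraph.Adj (i, j) (i + 1, j) :=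
  Or.inl ⟨rfl, Or.inr rfl⟩

theorem hexGraph_reachable_succ_snd (i j : ℤ) : hexGraph.Reachable (i, j) (i, j + 1) := by
  rcases Int.even_or_odd (i + j) with he | ho
  · exact Adj.reachable (Or.inr ⟨rfl, Or.inl ⟨he, rfl⟩⟩)
  · have h : hexGraph.Adj (i + 1, j) (i + 1, j + 1) :=
      Or.inr ⟨rfl, Or.inl ⟨by rw [add_right_comm]; exact ho.add_one, rfl⟩⟩
    exact (hexGraph_adj_succ_fst i j).reachable.trans
      (h.reachable.trans (hexGraph_adj_succ_fst i (j + 1)).symm.reachable)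

theorem hexGraph_connected : hexGraph.Connected := by
  refine (connected_iff _).2 ⟨fun ⟨a, b⟩ ⟨c, d⟩ => ?_, ⟨(0, 0)⟩⟩
  have hrow := reachable_of_forall_reachable_succ (fun i => (hexGraph_adj_succ_fst i b).reachable)
  exact (hrow a c).trans (reachable_of_forall_reachable_succ (hexGraph_reachable_succ_snd c) b d)

theorem hexGraph_deg (v : ℤ × ℤ) : deg hexGraph v = 3 := by
  obtain ⟨i, j⟩ := v
  rw [deg, Nat.card_coe_set_eq, Set.ncard_eq_three]
  refine ⟨(i + 1, j), (i - 1, j), (i, j + if Even (i + j) then 1 else -1),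
    by simp; omega, by simp, by simp, ?_⟩
  ext ⟨a, b⟩
  change hexGraph.Adj _ _ ↔ _
  simp only [hexGraph, Set.mem_insert_iff, Set.mem_singleton_iff, Prod.mk.injEq, Int.even_iff]
  split_ifs <;> omega

theorem hexGraph_no_four_cycle {x x' y z : ℤ × ℤ} (hy : hexGraph.Adj x y)
    (hxx' : hexGraph.Adj x x') (hz : hexGraph.Adj x' z) (hy' : x' ≠ y) (hz' : x ≠ z) :
    ¬hexGraph.Adj y z := by
  obtain ⟨a, b⟩ := x; obtain ⟨c, d⟩ := x'; obtain ⟨e, f⟩ := y; obtain ⟨g, k⟩ := z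
  simp only [hexGraph, Int.even_iff, ne_eq, Prod.mk.injEq] at *
  omega

theorem hexGraph_three_le_dist {x x' y z : ℤ × ℤ} (hy : hexGraph.Adj x y)
    (hxx' : hexGraph.Adj x x') (hz : hexGraph.Adj x' z) (hy' : x' ≠ y) (hz' : x ≠ z) :
    3 ≤ hexGraph.dist y z := by
  refine hexColoring.three_le_dist (hexGraph_connected y z) ?_
    (hexGraph_no_four_cycle hy hxx' hz hy' hz')
  have h₁ := hexColoring.valid hy
  have h₂ := hexColoring.valid hxx'
  have h₃ := hexColoring.valid hz
  revert h₁ h₂ h₃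
  cases hexColoring x <;> cases hexColoring x' <;> cases hexColoring y <;> cases hexColoring z <;>
    simp

/-- on the hexagonal tiling graph, the Ollivier–Ricci curvature
of every edge equals `−2/3`. -/
theorem hexagonal_ric (x x' : ℤ × ℤ) (h : hexGraph.Adj x x') :
    Filter.Tendsto (fun t => kappa hexGraph t x x' / t)
      (nhdsWithin 0 (Set.Ioi 0)) (nhds (-2/3)) := by
  refine tendsto_const_nhds.congr' ?_
  filter_upwards [Ioo_mem_nhdsGT (by norm_num : (0 : ℝ) < 3 / 4)] with t ht
  rw [kappa_eq_of_deg_eq_three hexGraph_connected h (hexGraph_deg x) (hexGraph_deg x')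
    (fun _ _ hy hz => hexGraph_three_le_dist hy h hz) ht.1.le ht.2.le]
  field_simp [ht.1.ne']
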